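/- arXiv:2501.16816 — 5 statements merged into one kernel-verified Lean document; each statement's English description precedes it below -/
import Mathlib

section
/- Let f : [0,∞) → [0,∞) be a continuous and non-decreasing function, and let x = (x_N)_{N∈ℕ} be a sequence in [0,1). If there exists k ∈ ℕ and infinitely many N ∈ ℕ such that the finite point set x_1,…,x_N has at most k distinct gap lengths, then x does not have f-pair correlations. -/
open Filter Set Asymptotics

/-- `nid x` is the distance from `x` to the nearest integer. -/
noncomputable def nid (x : ℝ) : ℝ := |x - round x|

/-- `pairCount x s N` is the pair counting function
`R(s,N) = #{(i,j) : 1 ≤ i ≠ j ≤ N, ‖x i - x j‖ ≤ s/N}`. -/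
noncomputable def pairCount (x : ℕ → ℝ) (s : ℝ) (N : ℕ) : ℕ :=
  {p : ℕ × ℕ | 1 ≤ p.1 ∧ p.1 ≤ N ∧ 1 ≤ p.2 ∧ p.2 ≤ N ∧ p.1 ≠ p.2 ∧
      nid (x p.1 - x p.2) ≤ s / N}.ncard

/-- The sequence `x` has `f`-pair correlations:
`R(s,N)/N → f s` for every `s ≥ 0`. -/
def HasPairCorr (x : ℕ → ℝ) (f : ℝ → ℝ) : Prop :=
  ∀ s : ℝ, 0 ≤ s →
    Tendsto (fun N : ℕ => (pairCount x s N : ℝ) / N) atTop (nhds (f s))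

/-- Given a (sorted) tuple `y : Fin N → ℝ`, the set of gap lengths: for every `i`
the torus distance between `y i` and its circular successor `y (i+1 mod N)`. -/
noncomputable def gapLengths {N : ℕ} (y : Fin N → ℝ) : Finset ℝ :=
  Finset.image (fun i : Fin N => nid (y (finRotate N i) - y i)) Finset.univ

/-- The point set `x 1, …, x N` has at most `k` distinct gap lengths: after sorting
the points (by a permutation `σ`), the distances (w.r.t. the torus metric) between
circularly consecutive elements take at most `k` distinct values. -/
noncomputable def AtMostGaps (x : ℕ → ℝ) (N k : ℕ) : Prop :=
  ∃ σ : Equiv.Perm (Fin N), Monotone (fun i : Fin N => x ((σ i : ℕ) + 1)) ∧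
    (gapLengths (fun i : Fin N => x ((σ i : ℕ) + 1))).card ≤ k

/-!
If `x` had `f`-pair correlations, then `R(0,N) ≤ B N` for all large `N`, and by Cauchy–Schwarz
the points `x_1, …, x_N` take at least about `N / (B + 1)` distinct values, so that many of the
`N` circular gaps are nonzero. When at most `k` gap lengths occur, one positive length `v` is
taken by at least `N / K` gaps, `K = (k + 1)(B + 2)`. These gaps add up to at most `1`, so
`a := N v ≤ K`, and each of them is a pair at distance exactly `a / N`: the function
`s ↦ R(s,N) / N` jumps by at least `1 / K` at `s = a`. A limit point in `[0, K]` of these jump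
positions along the infinitely many admissible `N` would be a jump of `f`, which is continuous.
-/

open Finset

lemma nid_nonneg (x : ℝ) : 0 ≤ nid x := abs_nonneg _

lemma nid_le_abs (x : ℝ) : nid x ≤ |x| := by simpa [nid] using round_le x 0

lemma nid_sub_eq_zero_iff {a b : ℝ} (ha : a ∈ Ico (0 : ℝ) 1) (hb : b ∈ Ico (0 : ℝ) 1) :
    nid (a - b) = 0 ↔ a = b := by
  refine ⟨fun h => ?_, fun h => by simp [nid, h]⟩
  have hint : a - b = round (a - b) := sub_eq_zero.1 (abs_eq_zero.1 h)
  have hlt : -1 < (round (a - b) : ℝ) ∧ (round (a - b) : ℝ) < 1 := by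
    rw [← hint]; constructor <;> linarith [ha.1, ha.2, hb.1, hb.2]
  have hzero : round (a - b) = 0 := by
    obtain ⟨h1, h2⟩ := hlt
    have : -1 < round (a - b) := by exact_mod_cast h1
    have : round (a - b) < 1 := by exact_mod_cast h2
    omega
  rw [hzero, Int.cast_zero] at hint
  linarith

noncomputable def closePairs {ι : Type*} [Fintype ι] [DecidableEq ι] (y : ι → ℝ) (r : ℝ) :
    Finset (ι × ι) :=
  {p | p.1 ≠ p.2 ∧ nid (y p.1 - y p.2) ≤ r}

lemma pairCount_eq_card_closePairs (x : ℕ → ℝ) (s : ℝ) {N : ℕ} (σ : Equiv.Perm (Fin N)) :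
    pairCount x s N = #(closePairs (fun i : Fin N => x ((σ i : ℕ) + 1)) (s / N)) := by
  have hsurj : ∀ n, 1 ≤ n → n ≤ N → ∃ i : Fin N, (σ i : ℕ) + 1 = n := fun n h1 h2 =>
    ⟨σ.symm ⟨n - 1, by omega⟩, by simp only [Equiv.apply_symm_apply]; omega⟩
  rw [pairCount, ← Set.ncard_coe_finset]
  refine (Set.ncard_congr (fun p _ => ((σ p.1 : ℕ) + 1, (σ p.2 : ℕ) + 1)) ?_ ?_ ?_).symm
  · rintro ⟨i, j⟩ hij
    simp only [closePairs, Finset.mem_coe, Finset.mem_filter, Finset.mem_univ, true_and] at hij ⊢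
    refine ⟨by omega, by omega, by omega, by omega, fun h => hij.1 ?_, hij.2⟩
    exact σ.injective (Fin.ext (by omega))
  · rintro ⟨i, j⟩ ⟨i', j'⟩ _ _ h
    simp only [Prod.mk.injEq] at h ⊢
    exact ⟨σ.injective (Fin.ext (by omega)), σ.injective (Fin.ext (by omega))⟩
  · rintro ⟨m, n⟩ ⟨hm1, hm2, hn1, hn2, hmn, hclose⟩
    obtain ⟨i, rfl⟩ := hsurj m hm1 hm2
    obtain ⟨j, rfl⟩ := hsurj n hn1 hn2
    refine ⟨(i, j), ?_, rfl⟩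
    simp only [closePairs, Finset.mem_coe, Finset.mem_filter, Finset.mem_univ, true_and]
    exact ⟨fun h => hmn (by rw [h]), hclose⟩

lemma closePairs_zero {ι : Type*} [Fintype ι] [DecidableEq ι] {y : ι → ℝ}
    (hy : ∀ i, y i ∈ Ico (0 : ℝ) 1) :
    closePairs y 0 = ({p : ι × ι | p.1 ≠ p.2 ∧ y p.1 = y p.2} : Finset (ι × ι)) := by
  ext p
  simp only [closePairs, Finset.mem_filter, Finset.mem_univ, true_and]
  rw [← nid_sub_eq_zero_iff (hy p.1) (hy p.2), (nid_nonneg _).ge_iff_eq']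

lemma card_sq_le_card_image_mul {ι α : Type*} [Fintype ι] [DecidableEq ι] [DecidableEq α]
    (y : ι → α) :
    Fintype.card ι ^ 2 ≤
      #(univ.image y) * (#{p : ι × ι | p.1 ≠ p.2 ∧ y p.1 = y p.2} + Fintype.card ι) := by
  have hcoll : #{p : ι × ι | y p.1 = y p.2} = ∑ v ∈ univ.image y, #{i | y i = v} ^ 2 := by
    rw [card_eq_sum_card_fiberwise (f := fun p => y p.1) (t := univ.image y)
      (fun p _ => mem_image_of_mem y (Finset.mem_univ p.1))]
    refine sum_congr rfl fun v _ => ?_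
    rw [sq, ← card_product]
    congr 1
    ext ⟨i, j⟩
    simp only [Finset.mem_filter, Finset.mem_univ, true_and, mem_product]
    constructor
    · rintro ⟨h, rfl⟩; exact ⟨rfl, h.symm⟩
    · rintro ⟨rfl, h⟩; exact ⟨h.symm, rfl⟩
  have hdiag : #{p : ι × ι | y p.1 = y p.2 ∧ ¬ p.1 ≠ p.2} = Fintype.card ι := by
    rw [← card_univ, ← diag_card (univ : Finset ι)]
    congr 1
    ext ⟨i, j⟩
    simp only [Finset.mem_filter, mem_diag, Finset.mem_univ, true_and, not_not]
    exact ⟨And.right, by rintro rfl; exact ⟨rfl, rfl⟩⟩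
  have hsplit : #{p : ι × ι | y p.1 = y p.2} =
      #{p : ι × ι | p.1 ≠ p.2 ∧ y p.1 = y p.2} + Fintype.card ι := by
    rw [← card_filter_add_card_filter_not (fun p : ι × ι => p.1 ≠ p.2), filter_filter,
      filter_filter, hdiag]
    simp only [and_comm]
  calc Fintype.card ι ^ 2 = (∑ v ∈ univ.image y, #{i | y i = v}) ^ 2 := by
        rw [← card_eq_sum_card_image, card_univ]
    _ ≤ #(univ.image y) * ∑ v ∈ univ.image y, #{i | y i = v} ^ 2 := sq_sum_le_card_mul_sum_sq
    _ = _ := by rw [← hcoll, hsplit]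

lemma card_image_le_card_filter_ne_add_one {α : Type*} [DecidableEq α] {N : ℕ} (y : Fin N → α) :
    #(univ.image y) ≤ #{i | y (finRotate N i) ≠ y i} + 1 := by
  cases N with
  | zero => simp
  | succ n =>
    set C : Finset (Fin (n + 1)) := {i | y (finRotate (n + 1) i) ≠ y i}
    have hreach : ∀ m (hm : m < n + 1),
        y ⟨m, hm⟩ ∈ insert (y 0) (C.image (y ∘ finRotate (n + 1))) := by
      intro m
      induction m with
      | zero => exact fun _ => mem_insert_self _ _
      | succ m ih =>
        intro hm
        have hrot : finRotate (n + 1) ⟨m, by omega⟩ = ⟨m + 1, hm⟩ := finRotate_of_lt (by omega)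
        by_cases h : y ⟨m + 1, hm⟩ = y ⟨m, by omega⟩
        · rw [h]; exact ih _
        · refine mem_insert_of_mem (mem_image.2 ⟨⟨m, by omega⟩, ?_, ?_⟩)
          · simpa only [C, Finset.mem_filter, Finset.mem_univ, true_and, hrot] using h
          · simp only [Function.comp_apply, hrot]
    calc #(univ.image y) ≤ #(insert (y 0) (C.image (y ∘ finRotate (n + 1)))) := by
          refine card_le_card fun v hv => ?_
          obtain ⟨i, -, rfl⟩ := mem_image.1 hv
          exact hreach i i.2
      _ ≤ #(C.image (y ∘ finRotate (n + 1))) + 1 := card_insert_le _ _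
      _ ≤ #C + 1 := by gcongr; exact card_image_le

lemma sum_nid_finRotate_sub_le_one {N : ℕ} {y : Fin N → ℝ} (hmono : Monotone y)
    (hy : ∀ i, y i ∈ Ico (0 : ℝ) 1) :
    ∑ i, nid (y (finRotate N i) - y i) ≤ 1 := by
  cases N with
  | zero => simp
  | succ n =>
    have htel : ∑ i, (y (finRotate (n + 1) i) - y i) = 0 := by
      rw [sum_sub_distrib, Equiv.sum_comp (finRotate (n + 1)) y, sub_self]
    -- only the wrap-around gap from the last point back to the first crosses `1`
    have hterm : ∀ i, nid (y (finRotate (n + 1) i) - y i) ≤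
        (y (finRotate (n + 1) i) - y i) + if i = Fin.last n then 1 else 0 := by
      intro i
      split_ifs with hi
      · subst hi
        rw [finRotate_last]
        calc nid (y 0 - y (Fin.last n)) ≤ |y 0 - y (Fin.last n) - ((-1 : ℤ) : ℝ)| :=
              round_le _ _
          _ = y 0 - y (Fin.last n) + 1 := by
              rw [Int.cast_neg, Int.cast_one, sub_neg_eq_add, abs_of_nonneg]
              linarith [(hy 0).1, (hy (Fin.last n)).2]
      · have hle : y i ≤ y (finRotate (n + 1) i) := by
          rw [finRotate_apply]
          exact hmono (Fin.lt_add_one_iff.2 (Fin.lt_last_iff_ne_last.2 hi)).le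
        rw [add_zero]
        exact (nid_le_abs _).trans (abs_of_nonneg (sub_nonneg.2 hle)).le
    calc ∑ i, nid (y (finRotate (n + 1) i) - y i)
        ≤ ∑ i, ((y (finRotate (n + 1) i) - y i) + if i = Fin.last n then 1 else 0) :=
          sum_le_sum fun i _ => hterm i
      _ = 1 := by rw [sum_add_distrib, htel, sum_ite_eq']; simp

lemma card_closePairs_add_card_le {ι : Type*} [Fintype ι] [DecidableEq ι] (y : ι → ℝ)
    (e : ι → ι) {T : Finset ι} {v r' r : ℝ} (hT : ∀ i ∈ T, nid (y (e i) - y i) = v)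
    (hr' : 0 ≤ r') (hr'v : r' < v) (hvr : v ≤ r) :
    #(closePairs y r') + #T ≤ #(closePairs y r) := by
  set P := T.image fun i => (e i, i)
  have hP : #P = #T := card_image_of_injective _ fun i j h => (Prod.ext_iff.1 h).2
  have hmem : ∀ p ∈ P, p ∈ closePairs y r ∧ p ∉ closePairs y r' := by
    rintro _ hp
    obtain ⟨i, hi, rfl⟩ := mem_image.1 hp
    have hne : e i ≠ i := fun h => by
      have := hT i hi
      rw [h, sub_self, nid, round_zero, Int.cast_zero, sub_zero, abs_zero] at this
      linarith
    simp only [closePairs, Finset.mem_filter, Finset.mem_univ, true_and, hT i hi, not_and,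
      not_le]
    exact ⟨⟨hne, hvr⟩, fun _ => hr'v⟩
  have hsub : closePairs y r' ⊆ closePairs y r := fun p hp => by
    simp only [closePairs, Finset.mem_filter] at hp ⊢
    exact ⟨hp.1, hp.2.1, hp.2.2.trans (hr'v.le.trans hvr)⟩
  calc #(closePairs y r') + #T = #(closePairs y r' ∪ P) := by
        rw [card_union_of_disjoint (disjoint_right.2 fun p hp => (hmem p hp).2), hP]
    _ ≤ #(closePairs y r) := card_le_card (union_subset hsub fun p hp => (hmem p hp).1)

lemma exists_frequent_gap {N k : ℕ} {y : Fin N → ℝ} {B : ℝ} (hy : ∀ i, y i ∈ Ico (0 : ℝ) 1)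
    (hk : #(gapLengths y) ≤ k) (hB : 0 ≤ B) (hR0 : (#(closePairs y 0) : ℝ) ≤ B * N)
    (hN : (B + 1) * (B + 2) < N) :
    ∃ v > 0, (N : ℝ) ≤ (k + 1) * (B + 2) * #{i | nid (y (finRotate N i) - y i) = v} := by
  set C : Finset (Fin N) := {i | y (finRotate N i) ≠ y i}
  have hNpos : (0 : ℝ) < N := by nlinarith
  have hCS : (N : ℝ) ^ 2 ≤ #(univ.image y) * (#(closePairs y 0) + N) := by
    have := card_sq_le_card_image_mul y
    rw [Fintype.card_fin, ← closePairs_zero hy] at this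
    exact_mod_cast this
  have hM : (#(univ.image y) : ℝ) ≤ #C + 1 := by
    exact_mod_cast card_image_le_card_filter_ne_add_one y
  have hMN : (N : ℝ) ≤ (#C + 1) * (B + 1) := by
    refine le_of_mul_le_mul_right ?_ hNpos
    nlinarith
  have hC : (N : ℝ) ≤ #C * (B + 2) := by
    by_contra! h
    nlinarith
  have hmaps : ∀ i ∈ C, nid (y (finRotate N i) - y i) ∈ (gapLengths y).erase 0 := by
    intro i hi
    refine mem_erase.2 ⟨fun h => ?_, mem_image_of_mem _ (Finset.mem_univ i)⟩
    exact (Finset.mem_filter.1 hi).2 ((nid_sub_eq_zero_iff (hy _) (hy _)).1 h)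
  obtain ⟨i, hi⟩ : C.Nonempty := by
    rw [← card_pos, ← Nat.cast_pos (α := ℝ)]
    nlinarith
  obtain ⟨v, hv, hcard⟩ := exists_le_card_fiber_of_nsmul_le_card_of_maps_to hmaps
    ⟨_, hmaps i hi⟩ (b := (N : ℝ) / ((k + 1) * (B + 2))) (by
      have hk' : (#((gapLengths y).erase 0) : ℝ) ≤ k := by
        exact_mod_cast (card_erase_le).trans hk
      rw [nsmul_eq_mul, mul_div_assoc', div_le_iff₀ (by positivity)]
      nlinarith)
  refine ⟨v, lt_of_le_of_ne ?_ (Ne.symm (ne_of_mem_erase hv)), ?_⟩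
  · obtain ⟨j, -, rfl⟩ := mem_image.1 (mem_of_mem_erase hv)
    exact nid_nonneg _
  · rw [div_le_iff₀' (by positivity)] at hcard
    refine hcard.trans (mul_le_mul_of_nonneg_left ?_ (by positivity))
    exact_mod_cast Finset.card_le_card (filter_subset_filter _ (subset_univ C))

lemma exists_jump_of_atMostGaps {x : ℕ → ℝ} (hx : ∀ n, x n ∈ Ico (0 : ℝ) 1) {N k : ℕ}
    (hgap : AtMostGaps x N k) {B : ℝ} (hB : 0 ≤ B) (hR0 : (pairCount x 0 N : ℝ) ≤ B * N)
    (hN : (B + 1) * (B + 2) < N) :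
    ∃ a ∈ Ioc 0 ((k + 1) * (B + 2)), ∀ s' s : ℝ, 0 ≤ s' → s' < a → a ≤ s →
      (pairCount x s' N : ℝ) / N + 1 / ((k + 1) * (B + 2)) ≤ (pairCount x s N : ℝ) / N := by
  obtain ⟨σ, hmono, hk⟩ := hgap
  set y := fun i : Fin N => x ((σ i : ℕ) + 1)
  have hy : ∀ i, y i ∈ Ico (0 : ℝ) 1 := fun i => hx _
  have hNpos : (0 : ℝ) < N := by nlinarith
  rw [pairCount_eq_card_closePairs x 0 σ, zero_div] at hR0
  obtain ⟨v, hv, hT⟩ := exists_frequent_gap hy hk hB hR0 hN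
  set T : Finset (Fin N) := {i | nid (y (finRotate N i) - y i) = v}
  have hTv : #T * v ≤ 1 := calc
    #T * v = ∑ i ∈ T, nid (y (finRotate N i) - y i) := by
      rw [sum_congr rfl fun i hi => (Finset.mem_filter.1 hi).2, sum_const, nsmul_eq_mul]
    _ ≤ ∑ i, nid (y (finRotate N i) - y i) :=
      sum_le_sum_of_subset_of_nonneg (subset_univ T) fun i _ _ => nid_nonneg _
    _ ≤ 1 := sum_nid_finRotate_sub_le_one hmono hy
  have hvK : N * v ≤ (k + 1) * (B + 2) := calc
    N * v ≤ (k + 1) * (B + 2) * #T * v := mul_le_mul_of_nonneg_right hT hv.le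
    _ = (k + 1) * (B + 2) * (#T * v) := by ring
    _ ≤ (k + 1) * (B + 2) := mul_le_of_le_one_right (by positivity) hTv
  refine ⟨N * v, ⟨by positivity, hvK⟩, fun s' s hs' hlt hle => ?_⟩
  have hjump := card_closePairs_add_card_le y (finRotate N) (T := T)
    (fun i hi => (Finset.mem_filter.1 hi).2) (div_nonneg hs' hNpos.le)
    ((div_lt_iff₀ hNpos).2 (by linarith)) ((le_div_iff₀ hNpos).2 (by linarith))
  rw [pairCount_eq_card_closePairs x s' σ, pairCount_eq_card_closePairs x s σ]
  have hTN : 1 / ((k + 1) * (B + 2)) ≤ (#T : ℝ) / N := by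
    rw [div_le_div_iff₀ (by positivity) hNpos]
    linarith
  calc _ ≤ (#(closePairs y (s' / N)) : ℝ) / N + #T / N := by gcongr
    _ = ((#(closePairs y (s' / N)) + #T : ℕ) : ℝ) / N := by push_cast; ring
    _ ≤ _ := by gcongr

lemma not_frequently_exists_jump {g : ℕ → ℝ → ℝ} {f : ℝ → ℝ} (hf : ContinuousOn f (Ici 0))
    (hg : ∀ s, 0 ≤ s → Tendsto (fun N => g N s) atTop (nhds (f s))) {K δ : ℝ} (hδ : 0 < δ) :
    ¬ ∃ᶠ N in atTop, ∃ a ∈ Ioc 0 K, ∀ s' s : ℝ, 0 ≤ s' → s' < a → a ≤ s →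
      g N s' + δ ≤ g N s := by
  intro hfreq
  obtain ⟨ψ, hψ, hjump⟩ := extraction_of_frequently_atTop hfreq
  choose a ha hjump using hjump
  obtain ⟨a₀, ha₀, φ, hφ, hlim⟩ :=
    isCompact_Icc.tendsto_subseq fun j => Ioc_subset_Icc_self (ha j)
  obtain ⟨ε, hε, hclose⟩ := Metric.continuousWithinAt_iff.1 (hf a₀ ha₀.1) (δ / 2) (half_pos hδ)
  set s := a₀ + ε / 2 with hs
  set s' := max (a₀ - ε / 2) 0 with hs'
  have hs'_le : s' ≤ a₀ := max_le (by linarith) ha₀.1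
  have hs'_ge : a₀ - ε / 2 ≤ s' := le_max_left _ _
  have hN : Tendsto (ψ ∘ φ) atTop atTop := hψ.tendsto_atTop.comp hφ.tendsto_atTop
  have hjump_lim : f s' + δ ≤ f s := by
    refine le_of_tendsto_of_tendsto (((hg s' (le_max_right _ _)).comp hN).add_const δ)
      ((hg s (by linarith [ha₀.1])).comp hN) ?_
    filter_upwards [hlim.eventually (Ioo_mem_nhds (by linarith : a₀ - ε / 2 < a₀)
      (by linarith : a₀ < s))] with j hj
    exact hjump _ _ _ (le_max_right _ _) (max_lt hj.1 (ha (φ j)).1) hj.2.le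
  have hfs := hclose (show 0 ≤ s by linarith [ha₀.1])
    (by rw [Real.dist_eq, abs_lt]; constructor <;> linarith)
  have hfs' := hclose (show 0 ≤ s' from le_max_right _ _)
    (by rw [Real.dist_eq, abs_lt]; constructor <;> linarith)
  rw [Real.dist_eq, abs_lt] at hfs hfs'
  linarith

theorem statement0_general (f : ℝ → ℝ)
    (hf_cont : ContinuousOn f (Ici 0))
    (x : ℕ → ℝ) (hx : ∀ n, x n ∈ Ico (0 : ℝ) 1) (k : ℕ)
    (hgap : {N : ℕ | AtMostGaps x N k}.Infinite) :
    ¬ HasPairCorr x f := by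
  intro hpc
  set B := |f 0| + 1
  have hB : 0 ≤ B := by positivity
  have hR0 : ∀ᶠ N : ℕ in atTop, (pairCount x 0 N : ℝ) / N < B :=
    (hpc 0 le_rfl).eventually_lt_const (lt_of_le_of_lt (le_abs_self _) (lt_add_one _))
  have hlarge : ∀ᶠ N : ℕ in atTop, (B + 1) * (B + 2) < N :=
    tendsto_natCast_atTop_atTop.eventually_gt_atTop _
  refine not_frequently_exists_jump hf_cont hpc (K := (k + 1) * (B + 2))
    (δ := 1 / ((k + 1) * (B + 2))) (by positivity) ?_
  refine ((Nat.frequently_atTop_iff_infinite.2 hgap).and_eventually (hR0.and hlarge)).mono ?_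
  rintro N ⟨hgapN, hR0N, hN⟩
  have hNpos : (0 : ℝ) < N := by nlinarith
  exact exists_jump_of_atMostGaps hx hgapN hB ((div_lt_iff₀ hNpos).1 hR0N).le hN

/-- If `f : [0,∞) → [0,∞)` is continuous and non-decreasing and the
sequence `x` in `[0,1)` is such that for some `k` and infinitely many `N` the point set
`x 1, …, x N` has at most `k` distinct gap lengths, then `x` does not have
`f`-pair correlations. -/
theorem statement0 (f : ℝ → ℝ) (hf_nonneg : ∀ s : ℝ, 0 ≤ s → 0 ≤ f s)
    (hf_cont : ContinuousOn f (Ici 0)) (hf_mono : MonotoneOn f (Ici 0))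
    (x : ℕ → ℝ) (hx : ∀ n, x n ∈ Ico (0 : ℝ) 1) (k : ℕ)
    (hgap : {N : ℕ | AtMostGaps x N k}.Infinite) :
    ¬ HasPairCorr x f :=
  statement0_general f hf_cont x hx k hgap
end

section
/- Let (x_N)_{N∈ℕ} be a sequence in [0,1) with the following property: there exist s ∈ ℕ, positive real numbers K, γ, and infinitely many N ∈ ℕ such that the point set x_1,…,x_N has a subset with M ≥ γN elements which is contained in a finite point set in [0,1) of cardinality at most KN having at most s distinct gap lengths. Then (x_N)_{N∈ℕ} does not have Poissonian pair correlations. -/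
open Filter Set Asymptotics

/-- A finite point set `Y ⊆ [0,1)` has at most `k` distinct gap lengths: the distances
(w.r.t. the torus metric) between circularly consecutive elements of its sorted
enumeration take at most `k` distinct values. -/
noncomputable def FinsetAtMostGaps (Y : Finset ℝ) (k : ℕ) : Prop :=
  (gapLengths (fun i : Fin Y.card => ((Y.orderIsoOfFin rfl i : ℝ)))).card ≤ k

/-!
Sort the indices in `J` by the value of `x` and consider the differences of consecutive values.
They sum to less than `1`, and the numbers of gaps of `Y` they span sum to less than
`#Y ≤ K N`, so by Markov's inequality most of them are `O(1 / N)` and span at most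
`H = ⌈4K/γ⌉` gaps of `Y`. Each such difference is a sum of at most `H` of the at most `s` gap
lengths of `Y`, hence takes one of at most `(s + 1) ^ H` values, and by pigeonhole a single
distance `d` with `d N = O(1)` is attained by `≫ N` pairs. Sorting `d N` into finitely many bins
of width `c / 4`, one bin is hit for infinitely many `N`; across it `R(·, N) / N` jumps by at
least `c`, whereas Poissonian pair correlations force this jump to tend to `c / 2`.
-/
open scoped Finset Pointwise

lemma nid_eq_self {t : ℝ} (h0 : 0 ≤ t) (h2 : t ≤ 1 / 2) : nid t = t := by
  rcases h2.lt_or_eq with h | rfl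
  · simp [nid, round_eq_zero_iff.2 ⟨by linarith, h⟩, abs_of_nonneg h0]
  · norm_num [nid, round_eq]

lemma card_filter_le_nsmul_le_sum {ι M : Type*} [AddCommMonoid M] [PartialOrder M]
    [IsOrderedAddMonoid M] [DecidableLE M] (s : Finset ι) (f : ι → M) (c : M)
    (hf : ∀ i ∈ s, 0 ≤ f i) :
    #{i ∈ s | c ≤ f i} • c ≤ ∑ i ∈ s, f i :=
  (Finset.card_nsmul_le_sum _ f c fun _ hi => (Finset.mem_filter.1 hi).2).trans
    (Finset.sum_le_sum_of_subset_of_nonneg (Finset.filter_subset _ _) fun i hi _ => hf i hi)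

section Pairs

variable (x : ℕ → ℝ) (N : ℕ)

noncomputable def pairsWithin (r : ℝ) : Finset (ℕ × ℕ) :=
  {p ∈ Finset.Icc 1 N ×ˢ Finset.Icc 1 N | p.1 ≠ p.2 ∧ nid (x p.1 - x p.2) ≤ r}

noncomputable def pairsAt (d : ℝ) : Finset (ℕ × ℕ) :=
  {p ∈ Finset.Icc 1 N ×ˢ Finset.Icc 1 N | p.1 ≠ p.2 ∧ nid (x p.1 - x p.2) = d}

lemma pairCount_eq_card_pairsWithin (s : ℝ) : pairCount x s N = #(pairsWithin x N (s / N)) := by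
  rw [pairCount, ← Set.ncard_coe_finset]
  congr 1
  ext p
  simp [pairsWithin, and_assoc]

variable {x N}

lemma pairsAt_subset_pairsWithin {d r : ℝ} (h : d ≤ r) : pairsAt x N d ⊆ pairsWithin x N r :=
  Finset.monotone_filter_right _ fun _ _ ⟨hne, hd⟩ => ⟨hne, hd.trans_le h⟩

lemma disjoint_pairsWithin_pairsAt {d r : ℝ} (h : r < d) :
    Disjoint (pairsWithin x N r) (pairsAt x N d) :=
  Finset.disjoint_filter.2 fun _ _ hr hd => (hr.2.trans_lt h).ne hd.2

lemma card_pairsAt_zero_le_pairCount : #(pairsAt x N 0) ≤ pairCount x 0 N := by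
  rw [pairCount_eq_card_pairsWithin, zero_div]
  exact Finset.card_le_card (pairsAt_subset_pairsWithin le_rfl)

lemma pairCount_add_card_pairsAt_le {α β d : ℝ} (hα : α / N < d) (hβ : d ≤ β / N) :
    pairCount x α N + #(pairsAt x N d) ≤ pairCount x β N := by
  rw [pairCount_eq_card_pairsWithin, pairCount_eq_card_pairsWithin,
    ← Finset.card_union_of_disjoint (disjoint_pairsWithin_pairsAt hα)]
  exact Finset.card_le_card (Finset.union_subset
    (Finset.monotone_filter_right _ fun _ _ ⟨hne, hr⟩ => ⟨hne, hr.trans (hα.le.trans hβ)⟩)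
    (pairsAt_subset_pairsWithin hβ))

end Pairs

lemma sub_mem_nsmul_gapLengths {n : ℕ} {w : Fin n → ℝ} (hw : Monotone w) (k : ℕ) :
    ∀ a b : Fin n, (a : ℕ) + k = b → w b - w a ≤ 1 / 2 →
      w b - w a ∈ k • insert 0 (gapLengths w) := by
  induction k with
  | zero =>
    intro a b hab _
    obtain rfl : a = b := Fin.ext (by simpa using hab)
    simp
  | succ k ih =>
    intro a b hab hhalf
    obtain ⟨m, rfl⟩ := Nat.exists_eq_succ_of_ne_zero (Fin.pos b).ne'
    set a' := finRotate (m + 1) a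
    have ha' : (a' : ℕ) = a + 1 :=
      coe_finRotate_of_ne_last (Fin.ne_of_val_ne (by simp only [Fin.val_last]; omega))
    have haa' : w a ≤ w a' := hw (Fin.le_def.2 (by omega))
    have ha'b : w a' ≤ w b := hw (Fin.le_def.2 (by omega))
    have hgap : w a' - w a ∈ gapLengths w := by
      have := Finset.mem_image_of_mem (fun i => nid (w (finRotate (m + 1) i) - w i))
        (Finset.mem_univ a)
      rwa [nid_eq_self (by linarith) (by linarith)] at this
    rw [show w b - w a = (w a' - w a) + (w b - w a') by ring, succ_nsmul']
    exact Finset.add_mem_add (Finset.mem_insert_of_mem hgap) (ih a' b (by omega) (by linarith))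

lemma exists_le_card_mul_card_filter_eq {m n h : ℕ} {ε : ℝ} (hε : 0 < ε) {D : ℕ → ℝ}
    {k : ℕ → ℕ} {T : Finset ℝ} (hT0 : 0 ∈ T) (hD : ∀ t, 0 ≤ D t)
    (hDsum : ∑ t ∈ Finset.range m, D t ≤ 1) (hksum : ∑ t ∈ Finset.range m, k t ≤ n)
    (hT : ∀ t, D t < ε → k t ≤ h → D t ∈ T) :
    ∃ d, 0 ≤ d ∧ d < ε ∧
      (m - n / (h + 1) - 1 / ε : ℝ) ≤ #T * #{t ∈ Finset.range m | D t = d} := by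
  set bigStep := {t ∈ Finset.range m | h + 1 ≤ k t}
  set bigGap := {t ∈ Finset.range m | ε ≤ D t}
  set good := (Finset.range m \ bigStep) \ bigGap
  have hbigStep : (#bigStep : ℝ) ≤ n / (h + 1) := by
    rw [le_div_iff₀ (by positivity)]
    have := card_filter_le_nsmul_le_sum (Finset.range m) k (h + 1) fun _ _ => Nat.zero_le _
    rw [smul_eq_mul] at this
    exact_mod_cast this.trans hksum
  have hbigGap : (#bigGap : ℝ) ≤ 1 / ε := by
    rw [le_div_iff₀ hε]
    have := card_filter_le_nsmul_le_sum (Finset.range m) D ε fun t _ => hD t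
    rw [nsmul_eq_mul] at this
    exact this.trans hDsum
  have hgood : (m : ℝ) ≤ #good + #bigGap + #bigStep := by
    have h1 : #(Finset.range m \ bigStep) ≤ #good + #bigGap :=
      Finset.card_le_card_sdiff_add_card
    have h2 : #(Finset.range m) ≤ #(Finset.range m \ bigStep) + #bigStep :=
      Finset.card_le_card_sdiff_add_card
    rw [Finset.card_range] at h2
    exact_mod_cast (by omega : m ≤ #good + #bigGap + #bigStep)
  set T' := {d ∈ T | 0 ≤ d ∧ d < ε}
  have hmaps : ∀ t ∈ good, D t ∈ T' := by
    intro t ht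
    simp only [good, bigStep, bigGap, Finset.mem_sdiff, Finset.mem_filter, not_and, not_le] at ht
    exact Finset.mem_filter.2
      ⟨hT t (ht.2 ht.1.1) (Nat.lt_succ_iff.1 (ht.1.2 ht.1.1)), hD t, ht.2 ht.1.1⟩
  have hT'ne : T'.Nonempty := ⟨0, Finset.mem_filter.2 ⟨hT0, le_rfl, hε⟩⟩
  have hT' : 0 < (#T' : ℝ) := by exact_mod_cast hT'ne.card_pos
  obtain ⟨d, hdT', hd⟩ := Finset.exists_le_card_fiber_of_nsmul_le_card_of_maps_to hmaps
    hT'ne (b := (#good : ℝ) / #T')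
    (by rw [nsmul_eq_mul, mul_div_cancel₀ _ hT'.ne'])
  obtain ⟨-, hd0, hdε⟩ := Finset.mem_filter.1 hdT'
  refine ⟨d, hd0, hdε, ?_⟩
  calc (m - n / (h + 1) - 1 / ε : ℝ) ≤ #good := by linarith
    _ ≤ #T' * #{t ∈ good | D t = d} := by rwa [div_le_iff₀' hT'] at hd
    _ ≤ #T * #{t ∈ Finset.range m | D t = d} := by
      gcongr
      · exact Finset.filter_subset _ _
      · exact (Finset.sdiff_subset.trans Finset.sdiff_subset)

lemma exists_many_steps_eq {Y : Finset ℝ} {s : ℕ} (hY : (Y : Set ℝ) ⊆ Ico 0 1)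
    (hgaps : FinsetAtMostGaps Y s) {z : ℕ → ℝ} (hz : Monotone z) (hzY : ∀ t, z t ∈ Y)
    (m h : ℕ) {ε : ℝ} (hε : 0 < ε) (hε2 : ε ≤ 1 / 2) :
    ∃ d, 0 ≤ d ∧ d < ε ∧ (m - #Y / (h + 1) - 1 / ε : ℝ) ≤
      (s + 1) ^ h * #{t ∈ Finset.range m | z (t + 1) - z t = d} := by
  set e := Y.orderIsoOfFin rfl
  set w : Fin #Y → ℝ := fun i => (e i : ℝ)
  have hw : Monotone w := fun i j hij => e.monotone hij
  set pos : ℕ → Fin #Y := fun t => e.symm ⟨z t, hzY t⟩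
  have hwpos : ∀ t, w (pos t) = z t := fun t => by simp [w, pos]
  have hpos : Monotone pos := fun a b hab => e.symm.monotone (Subtype.mk_le_mk.2 (hz hab))
  set A := insert 0 (gapLengths w)
  obtain ⟨d, hd0, hdε, hd⟩ := exists_le_card_mul_card_filter_eq (m := m) (n := #Y) (h := h) hε
    (D := fun t => z (t + 1) - z t) (k := fun t => pos (t + 1) - pos t) (T := h • A)
    (Finset.zero_mem_nsmul (Finset.mem_insert_self 0 _)) (fun t => sub_nonneg.2 (hz t.le_succ))
    (by rw [Finset.sum_range_sub]; linarith [(hY (hzY m)).2, (hY (hzY 0)).1])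
    (by
      rw [Finset.sum_range_tsub (f := fun t => (pos t : ℕ)) fun a b hab => hpos hab]
      omega)
    (fun t hD hk => by
      have hstep := sub_mem_nsmul_gapLengths hw _ (pos t) (pos (t + 1))
        (Nat.add_sub_of_le (hpos t.le_succ)) (by rw [hwpos, hwpos]; linarith)
      rw [hwpos, hwpos] at hstep
      exact Finset.nsmul_subset_nsmul_right (Finset.mem_insert_self 0 _) hk hstep)
  refine ⟨d, hd0, hdε, hd.trans ?_⟩
  have hA : #(h • A) ≤ (s + 1) ^ h :=
    Finset.card_nsmul_le.trans (Nat.pow_le_pow_left (Finset.card_insert_le _ _ |>.trans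
      (Nat.succ_le_succ hgaps)) h)
  gcongr
  exact_mod_cast hA

lemma exists_many_pairsAt {x : ℕ → ℝ} {N s : ℕ} {J : Finset ℕ} {Y : Finset ℝ}
    (hJ : J ⊆ Finset.Icc 1 N) (hY : (Y : Set ℝ) ⊆ Ico 0 1) (hgaps : FinsetAtMostGaps Y s)
    (hJY : ∀ j ∈ J, x j ∈ Y) (h : ℕ) {ε : ℝ} (hε : 0 < ε) (hε2 : ε ≤ 1 / 2) :
    ∃ d, 0 ≤ d ∧ d < ε ∧
      (#J - 1 - #Y / (h + 1) - 1 / ε : ℝ) ≤ (s + 1) ^ h * #(pairsAt x N d) := by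
  rcases J.eq_empty_or_nonempty with rfl | hJne
  · refine ⟨0, le_rfl, hε, ?_⟩
    have : (0 : ℝ) ≤ #Y / (h + 1) := by positivity
    have : (0 : ℝ) ≤ (s + 1) ^ h * #(pairsAt x N 0) := by positivity
    simp only [Finset.card_empty, Nat.cast_zero]
    linarith [one_div_pos.2 hε]
  set M := #J
  have hM : 0 < M := hJne.card_pos
  set e : Fin M ≃ J := J.equivFin.symm
  set σ := Tuple.sort fun i => x (e i)
  -- `idx` lists `J` in increasing order of `x`, then stays at the last element
  set idx : ℕ → ℕ := fun t => e (σ ⟨min t (M - 1), by omega⟩)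
  have hidxJ : ∀ t, idx t ∈ J := fun t => (e _).2
  have hmono : Monotone (x ∘ idx) := fun a b hab =>
    Tuple.monotone_sort (fun i => x (e i)) (Fin.mk_le_mk.2 (min_le_min_right _ hab))
  have hidx_inj : ∀ t t', t ≤ M - 1 → t' ≤ M - 1 → idx t = idx t' → t = t' := by
    intro t t' ht ht' heq
    have := Fin.mk.inj_iff.1 (σ.injective (e.injective (Subtype.ext heq)))
    omega
  obtain ⟨d, hd0, hdε, hd⟩ :=
    exists_many_steps_eq hY hgaps hmono (fun t => hJY _ (hidxJ t)) (M - 1) h hε hε2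
  refine ⟨d, hd0, hdε, ?_⟩
  have hpairs : #{t ∈ Finset.range (M - 1) | x (idx (t + 1)) - x (idx t) = d} ≤
      #(pairsAt x N d) := by
    refine Finset.card_le_card_of_injOn (fun t => (idx (t + 1), idx t)) ?_ ?_
    · intro t ht
      obtain ⟨ht, hdt⟩ := Finset.mem_filter.1 ht
      have ht := Finset.mem_range.1 ht
      refine Finset.mem_filter.2 ⟨Finset.mem_product.2 ⟨hJ (hidxJ _), hJ (hidxJ _)⟩, ?_, ?_⟩
      · exact fun heq => by have := hidx_inj _ _ (by omega) (by omega) heq; omega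
      · rw [hdt, nid_eq_self hd0 (by linarith)]
    · intro t ht t' ht' heq
      simp only [Finset.coe_filter, Finset.mem_range, Set.mem_ofPred_eq] at ht ht'
      exact hidx_inj t t' (by omega) (by omega) (Prod.ext_iff.1 heq).2
  rw [Nat.cast_sub hM, Nat.cast_one] at hd
  exact hd.trans (by gcongr; exact hpairs)

namespace HasPairCorr

variable {x : ℕ → ℝ}

lemma not_frequently_card_pairsAt_zero (hx : HasPairCorr x fun s => 2 * s) {c : ℝ}
    (hc : 0 < c) : ¬ ∃ᶠ N : ℕ in atTop, c * N ≤ #(pairsAt x N 0) := by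
  rw [Filter.not_frequently]
  filter_upwards [(hx 0 le_rfl).eventually_lt_const (by simpa using hc), eventually_gt_atTop 0]
    with N hN hN0 hcard
  have hle : (#(pairsAt x N 0) : ℝ) ≤ pairCount x 0 N := by
    exact_mod_cast card_pairsAt_zero_le_pairCount
  rw [div_lt_iff₀ (by positivity)] at hN
  linarith

lemma not_frequently_card_pairsAt_Ioc (hx : HasPairCorr x fun s => 2 * s) {α δ c : ℝ}
    (hα : 0 ≤ α) (hδ : 0 < δ) (hc : 2 * δ < c) :
    ¬ ∃ᶠ N : ℕ in atTop,
      ∃ d, α < d * N ∧ d * N ≤ α + δ ∧ c * N ≤ #(pairsAt x N d) := by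
  rw [Filter.not_frequently]
  have hlim := (hx (α + δ) (by positivity)).sub (hx α hα)
  filter_upwards [hlim.eventually_lt_const (by linarith), eventually_gt_atTop 0]
    with N hN hN0 ⟨d, hαd, hdβ, hcard⟩
  have hN' : (0 : ℝ) < N := by exact_mod_cast hN0
  have hjump : (pairCount x α N : ℝ) + #(pairsAt x N d) ≤ pairCount x (α + δ) N := by
    exact_mod_cast pairCount_add_card_pairsAt_le ((div_lt_iff₀ hN').2 hαd)
      ((le_div_iff₀ hN').2 hdβ)
  rw [div_sub_div_same, div_lt_iff₀ hN'] at hN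
  linarith

lemma not_frequently_card_pairsAt (hx : HasPairCorr x fun s => 2 * s) {c : ℝ} (hc : 0 < c)
    (B : ℝ) :
    ¬ ∃ᶠ N : ℕ in atTop, ∃ d, 0 ≤ d ∧ d * N ≤ B ∧ c * N ≤ #(pairsAt x N d) := by
  set δ := c / 4
  have hδ : 0 < δ := by positivity
  have hbins : ∀ k ∈ Finset.range ⌈B / δ⌉₊, ∀ᶠ N : ℕ in atTop,
      ¬ ∃ d, k * δ < d * N ∧ d * N ≤ k * δ + δ ∧ c * N ≤ #(pairsAt x N d) :=
    fun k _ => Filter.not_frequently.1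
      (not_frequently_card_pairsAt_Ioc hx (by positivity) hδ (by simp only [δ]; linarith))
  rw [Filter.not_frequently]
  filter_upwards [Filter.not_frequently.1 (not_frequently_card_pairsAt_zero hx hc),
    (Filter.eventually_all_finset _).2 hbins, eventually_gt_atTop 0]
    with N hzero hbin hN ⟨d, hd0, hdB, hcard⟩
  rcases hd0.eq_or_lt with rfl | hd
  · exact hzero hcard
  have hdN : 0 < d * N / δ := by positivity
  obtain ⟨k, hk⟩ := Nat.exists_eq_succ_of_ne_zero (Nat.ceil_pos.2 hdN).ne'
  have hlt : (k : ℝ) < d * N / δ := by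
    have := Nat.ceil_lt_add_one hdN.le
    rw [hk] at this
    push_cast at this
    linarith
  have hle : d * N / δ ≤ k + 1 := by
    have := Nat.le_ceil (d * N / δ)
    rw [hk] at this
    exact_mod_cast this
  refine hbin k (Finset.mem_range.2 ?_) ⟨d, ?_, ?_, hcard⟩
  · have := Nat.ceil_mono (div_le_div_of_nonneg_right hdB hδ.le)
    omega
  · rwa [lt_div_iff₀ hδ] at hlt
  · rw [div_le_iff₀ hδ] at hle
    linarith

end HasPairCorr

theorem statement2_general (x : ℕ → ℝ)
    (h : ∃ (s : ℕ) (K γ : ℝ), 0 < K ∧ 0 < γ ∧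
      {N : ℕ | ∃ (J : Finset ℕ) (Y : Finset ℝ),
          J ⊆ Finset.Icc 1 N ∧ γ * N ≤ (J.card : ℝ) ∧
          (Y : Set ℝ) ⊆ Ico (0 : ℝ) 1 ∧ (Y.card : ℝ) ≤ K * N ∧
          FinsetAtMostGaps Y s ∧ ∀ j ∈ J, x j ∈ Y}.Infinite) :
    ¬ HasPairCorr x (fun s => 2 * s) := by
  intro hx
  obtain ⟨s, K, γ, -, hγ, hinf⟩ := h
  set H := ⌈4 * K / γ⌉₊
  have hlarge : ∀ᶠ N : ℕ in atTop, 8 ≤ γ * N :=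
    (tendsto_natCast_atTop_atTop.const_mul_atTop hγ).eventually_ge_atTop 8
  refine hx.not_frequently_card_pairsAt (c := γ / (4 * (s + 1) ^ H)) (by positivity) (4 / γ)
    (((Nat.frequently_atTop_iff_infinite.2 hinf).and_eventually hlarge).mono ?_)
  rintro N ⟨⟨J, Y, hJ, hJcard, hY, hYcard, hgaps, hJY⟩, hN⟩
  have hγN : 0 < γ * N := by linarith
  obtain ⟨d, hd0, hdε, hd⟩ := exists_many_pairsAt hJ hY hgaps hJY H (ε := 4 / (γ * N))
    (by positivity) (by rw [div_le_iff₀ hγN]; linarith)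
  refine ⟨d, hd0, ?_, ?_⟩
  · rw [lt_div_iff₀ hγN] at hdε
    rw [le_div_iff₀ hγ]
    linarith
  · have hH : 4 * K ≤ H * γ := (div_le_iff₀ hγ).1 (Nat.le_ceil _)
    have hY' : (#Y : ℝ) / (H + 1) ≤ γ * N / 4 := by
      rw [div_le_iff₀ (by positivity)]
      nlinarith
    rw [one_div_div] at hd
    rw [div_mul_eq_mul_div, div_le_iff₀ (by positivity)]
    nlinarith

/-- (Larcher–Stockinger) If there are `s ∈ ℕ`, positive reals `K, γ`
and infinitely many `N` such that among `x 1, …, x N` there is a subset of at least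
`γN` elements contained in a finite point set of cardinality at most `KN` having at
most `s` distinct gap lengths, then `x` does not have Poissonian pair correlations. -/
theorem statement2 (x : ℕ → ℝ) (hx : ∀ n, x n ∈ Ico (0 : ℝ) 1)
    (h : ∃ (s : ℕ) (K γ : ℝ), 0 < K ∧ 0 < γ ∧
      {N : ℕ | ∃ (J : Finset ℕ) (Y : Finset ℝ),
          J ⊆ Finset.Icc 1 N ∧ γ * N ≤ (J.card : ℝ) ∧
          (Y : Set ℝ) ⊆ Ico (0 : ℝ) 1 ∧ (Y.card : ℝ) ≤ K * N ∧
          FinsetAtMostGaps Y s ∧ ∀ j ∈ J, x j ∈ Y}.Infinite) :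
    ¬ HasPairCorr x (fun s => 2 * s) :=
  statement2_general x h
end

section
/- Let (X_N)_{N∈ℕ} be a sequence of independent random variables, each uniformly distributed on [0,1]. Then almost surely, for all s ≥ 0, lim_{N→∞} (1/N) · #{(i,j) : 1 ≤ i ≠ j ≤ N, ‖X_i − X_j‖ ≤ s/N} = 2s; that is, the sequence almost surely has Poissonian pair correlations. -/
open Filter Set Asymptotics

open MeasureTheory ProbabilityTheory

/-!
Read `‖·‖` as the norm of `ℝ/ℤ`. For `i ≠ j` the event `A_ij = {‖X_i - X_j‖ ≤ u}` has
probability `min 1 (2u)` and is independent of `(X_k)_{k ≠ i}`: conditionally on those, `X_i` is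
uniform on the circle and every closed ball of radius `u` there has measure `min 1 (2u)`. So
`A_p` and `A_q` are uncorrelated unless `q = p` or `q = p.swap`, and `R(t,N) = ∑ 1_{A_p}` (with
`u = t/N`) has mean `2t(N - 1)` for large `N` and variance at most `4tN`. Chebyshev and
Borel–Cantelli along `N = m²` give `R(t,m²)/m² → 2t` almost surely for all rational `t ≥ 0` at
once, and the monotonicity of `R(s,N)` in `s/N` and `N` interpolates between consecutive squares
and rational scales.
-/

open Topology

lemma nid_eq_norm (x : ℝ) : nid x = ‖(x : UnitAddCircle)‖ := UnitAddCircle.norm_eq.symm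

lemma continuous_nid : Continuous nid := by
  simp only [funext nid_eq_norm]
  fun_prop

lemma nid_neg (x : ℝ) : nid (-x) = nid x := by
  rw [nid_eq_norm, nid_eq_norm, AddCircle.coe_neg, norm_neg]

lemma pairCount_eq_card_filter (x : ℕ → ℝ) (s : ℝ) (N : ℕ) :
    pairCount x s N =
      ((Finset.Icc 1 N).offDiag.filter fun p ↦ nid (x p.1 - x p.2) ≤ s / N).card := by
  rw [pairCount, ← Set.ncard_coe_finset]
  congr 1
  ext p
  simp only [Finset.coe_filter, Finset.mem_offDiag, Finset.mem_Icc, Set.mem_ofPred_eq]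
  tauto

lemma pairCount_mono (x : ℕ → ℝ) {s s' : ℝ} {N M : ℕ} (hNM : N ≤ M) (h : s / N ≤ s' / M) :
    pairCount x s N ≤ pairCount x s' M := by
  rw [pairCount_eq_card_filter, pairCount_eq_card_filter]
  refine Finset.card_le_card fun p hp ↦ ?_
  simp only [Finset.mem_filter, Finset.mem_offDiag, Finset.mem_Icc] at hp ⊢
  exact ⟨⟨⟨hp.1.1.1, hp.1.1.2.trans hNM⟩, ⟨hp.1.2.1.1, hp.1.2.1.2.trans hNM⟩, hp.1.2.2⟩,
    hp.2.trans h⟩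

lemma cast_card_offDiag_Icc (N : ℕ) :
    (((Finset.Icc 1 N).offDiag.card : ℕ) : ℝ) = (N : ℝ) ^ 2 - N := by
  rw [Finset.offDiag_card, Nat.card_Icc, Nat.add_sub_cancel, Nat.cast_sub (Nat.le_mul_self N)]
  push_cast
  ring

section Interpolation

lemma Nat.tendsto_sqrt_atTop : Tendsto Nat.sqrt atTop atTop :=
  tendsto_atTop_atTop.2 fun k ↦ ⟨k * k, fun _ hN ↦ Nat.le_sqrt.2 hN⟩

lemma tendsto_div_add_one_sq : Tendsto (fun m : ℕ ↦ ((m : ℝ) / (m + 1)) ^ 2) atTop (𝓝 1) := by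
  simpa using (tendsto_natCast_div_add_atTop (1 : ℝ)).pow 2

lemma eventually_mul_add_one_sq_le {a b : ℝ} (hab : a < b) :
    ∀ᶠ m : ℕ in atTop, a * ((m : ℝ) + 1) ^ 2 ≤ b * (m : ℝ) ^ 2 := by
  have hb : Tendsto (fun m : ℕ ↦ b * ((m : ℝ) / (m + 1)) ^ 2) atTop (𝓝 b) := by
    simpa using tendsto_div_add_one_sq.const_mul b
  filter_upwards [hb.eventually_const_le hab] with m hm
  have hm1 : (0 : ℝ) < (m : ℝ) + 1 := by positivity
  calc a * ((m : ℝ) + 1) ^ 2 ≤ b * ((m : ℝ) / (m + 1)) ^ 2 * ((m : ℝ) + 1) ^ 2 := by gcongr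
    _ = b * (m : ℝ) ^ 2 := by field_simp

variable {x : ℕ → ℝ}
  (h : ∀ q : ℚ, 0 ≤ q →
    Tendsto (fun m : ℕ ↦ (pairCount x q (m ^ 2) : ℝ) / (m : ℝ) ^ 2) atTop (𝓝 (2 * (q : ℝ))))

include h in
lemma eventually_lt_pairCount_div {s b : ℝ} (hb : b < 2 * s) :
    ∀ᶠ N : ℕ in atTop, b < (pairCount x s N : ℝ) / N := by
  rcases lt_or_ge b 0 with hb0 | hb0
  · exact .of_forall fun N ↦ hb0.trans_le (by positivity)
  obtain ⟨q, hbq, hqs⟩ := exists_rat_btwn (show b / 2 < s by linarith)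
  have hq : (0 : ℝ) ≤ q := by linarith
  have hlow : Tendsto (fun m : ℕ ↦ (pairCount x q (m ^ 2) : ℝ) / ((m : ℝ) + 1) ^ 2) atTop
      (𝓝 (2 * (q : ℝ))) := by
    have := (h q (by exact_mod_cast hq)).mul tendsto_div_add_one_sq
    rw [mul_one] at this
    refine this.congr' ?_
    filter_upwards [eventually_ne_atTop 0] with m hm
    field_simp
  filter_upwards [Nat.tendsto_sqrt_atTop.eventually
    ((hlow.eventually_const_lt (show b < 2 * (q : ℝ) by linarith)).and
      (eventually_mul_add_one_sq_le hqs)), eventually_ge_atTop 1] with N ⟨hbm, hqm⟩ hN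
  set m := N.sqrt
  have hN0 : (0 : ℝ) < N := by exact_mod_cast hN
  have hNm : (N : ℝ) < ((m : ℝ) + 1) ^ 2 := by exact_mod_cast Nat.lt_succ_sqrt' N
  have hmono : pairCount x q (m ^ 2) ≤ pairCount x s N := by
    refine pairCount_mono x (Nat.sqrt_le' N) ?_
    rw [div_le_div_iff₀ (by push_cast; positivity) hN0]
    push_cast
    nlinarith
  calc b < (pairCount x q (m ^ 2) : ℝ) / ((m : ℝ) + 1) ^ 2 := hbm
    _ ≤ (pairCount x s N : ℝ) / ((m : ℝ) + 1) ^ 2 := by gcongr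
    _ ≤ (pairCount x s N : ℝ) / N := by gcongr

include h in
lemma eventually_pairCount_div_lt {s b : ℝ} (hs : 0 ≤ s) (hb : 2 * s < b) :
    ∀ᶠ N : ℕ in atTop, (pairCount x s N : ℝ) / N < b := by
  obtain ⟨q, hsq, hqb⟩ := exists_rat_btwn (show s < b / 2 by linarith)
  have hq : (0 : ℝ) ≤ q := by linarith
  have hupp : Tendsto (fun m : ℕ ↦ (pairCount x q ((m + 1) ^ 2) : ℝ) / (m : ℝ) ^ 2) atTop
      (𝓝 (2 * (q : ℝ))) := by
    have := ((h q (by exact_mod_cast hq)).comp (tendsto_add_atTop_nat 1)).mul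
      (tendsto_div_add_one_sq.inv₀ one_ne_zero)
    rw [inv_one, mul_one] at this
    refine this.congr' ?_
    filter_upwards [eventually_ne_atTop 0] with m hm
    simp only [Function.comp_apply]
    push_cast
    field_simp
  filter_upwards [Nat.tendsto_sqrt_atTop.eventually
    ((hupp.eventually_lt_const (show 2 * (q : ℝ) < b by linarith)).and
      (eventually_mul_add_one_sq_le hsq)), eventually_ge_atTop 1] with N ⟨hbm, hqm⟩ hN
  set m := N.sqrt
  have hN0 : (0 : ℝ) < N := by exact_mod_cast hN
  have hm0 : (0 : ℝ) < (m : ℝ) ^ 2 := by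
    have : 0 < m := Nat.sqrt_pos.2 hN
    positivity
  have hmN : (m : ℝ) ^ 2 ≤ N := by exact_mod_cast Nat.sqrt_le' N
  have hmono : pairCount x s N ≤ pairCount x q ((m + 1) ^ 2) := by
    refine pairCount_mono x (Nat.lt_succ_sqrt' N).le ?_
    rw [div_le_div_iff₀ hN0 (by positivity)]
    push_cast
    nlinarith
  calc (pairCount x s N : ℝ) / N ≤ (pairCount x q ((m + 1) ^ 2) : ℝ) / N := by gcongr
    _ ≤ (pairCount x q ((m + 1) ^ 2) : ℝ) / (m : ℝ) ^ 2 := by gcongr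
    _ < b := hbm

include h in
lemma tendsto_pairCount_of_tendsto_sq {s : ℝ} (hs : 0 ≤ s) :
    Tendsto (fun N : ℕ ↦ (pairCount x s N : ℝ) / N) atTop (𝓝 (2 * s)) :=
  tendsto_order.2 ⟨fun _ hb ↦ eventually_lt_pairCount_div h hb,
    fun _ hb ↦ eventually_pairCount_div_lt h hs hb⟩

end Interpolation

lemma map_coe_volume_restrict_Icc :
    (volume.restrict (Icc (0 : ℝ) 1)).map ((↑) : ℝ → UnitAddCircle) = volume := by
  rw [← Measure.restrict_congr_set Ioc_ae_eq_Icc]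
  simpa using (UnitAddCircle.measurePreserving_mk 0).map_eq

lemma volume_restrict_Icc_nid_sub_le (y u : ℝ) :
    volume.restrict (Icc (0 : ℝ) 1) {x | nid (x - y) ≤ u} = ENNReal.ofReal (min 1 (2 * u)) := by
  have hball : {x : ℝ | nid (x - y) ≤ u} =
      ((↑) : ℝ → UnitAddCircle) ⁻¹' Metric.closedBall (y : UnitAddCircle) u := by
    ext x
    simp [nid_eq_norm, dist_eq_norm]
  rw [hball, ← Measure.map_apply (by fun_prop) Metric.isClosed_closedBall.measurableSet,
    map_coe_volume_restrict_Icc, AddCircle.volume_closedBall]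

section Probability

variable {Ω : Type*} [MeasurableSpace Ω] {μ : Measure Ω}

lemma memLp_two_indicator_one [IsFiniteMeasure μ] {s : Set Ω} (hs : MeasurableSet s) :
    MemLp (s.indicator (1 : Ω → ℝ)) 2 μ :=
  memLp_indicator_const 2 hs 1 (.inr (measure_ne_top μ s))

lemma covariance_indicator_one [IsProbabilityMeasure μ] {s t : Set Ω} (hs : MeasurableSet s)
    (ht : MeasurableSet t) :
    cov[s.indicator 1, t.indicator 1; μ] = μ.real (s ∩ t) - μ.real s * μ.real t := by
  rw [covariance_eq_sub (memLp_two_indicator_one hs) (memLp_two_indicator_one ht),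
    ← inter_indicator_one, integral_indicator_one (hs.inter ht), integral_indicator_one hs,
    integral_indicator_one ht]

lemma ae_tendsto_zero_of_tsum_measure_le_abs_ne_top {Y : ℕ → Ω → ℝ}
    (h : ∀ ε > 0, ∑' m, μ {ω | ε ≤ |Y m ω|} ≠ ⊤) :
    ∀ᵐ ω ∂μ, Tendsto (Y · ω) atTop (𝓝 0) := by
  have hk : ∀ᵐ ω ∂μ, ∀ k : ℕ, ∀ᶠ m in atTop, |Y m ω| < 1 / (k + 1) := by
    refine ae_all_iff.2 fun k ↦ ?_
    filter_upwards [ae_eventually_notMem (h _ Nat.one_div_pos_of_nat)] with ω hω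
    simpa using hω
  filter_upwards [hk] with ω hω
  refine Metric.tendsto_nhds.2 fun ε hε ↦ ?_
  obtain ⟨k, hkε⟩ := exists_nat_one_div_lt hε
  filter_upwards [hω k] with m hm
  rw [Real.dist_eq, sub_zero]
  exact hm.trans hkε

lemma ae_tendsto_sub_integral_div_sq [IsFiniteMeasure μ] {Y : ℕ → Ω → ℝ} {C : ℝ}
    (hY : ∀ m, MemLp (Y m) 2 μ) (hvar : ∀ m : ℕ, Var[Y m; μ] ≤ C * m ^ 2) :
    ∀ᵐ ω ∂μ, Tendsto (fun m : ℕ ↦ (Y m ω - μ[Y m]) / m ^ 2) atTop (𝓝 0) := by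
  have hC : 0 ≤ C := by simpa using (variance_nonneg (Y 1) μ).trans (hvar 1)
  refine ae_tendsto_zero_of_tsum_measure_le_abs_ne_top fun ε hε ↦ ?_
  have hbound (m : ℕ) : μ {ω | ε ≤ |(Y m ω - μ[Y m]) / m ^ 2|} ≤
      ENNReal.ofReal (C / ε ^ 2 * (1 / (m : ℝ) ^ 2)) := by
    -- at `m = 0` the quotient is `x / 0 = 0`, so the event is empty
    rcases eq_or_ne m 0 with rfl | hm
    · simp [hε.not_ge]
    have hm2 : (0 : ℝ) < (m : ℝ) ^ 2 := by positivity
    have hset : {ω | ε ≤ |(Y m ω - μ[Y m]) / m ^ 2|} =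
        {ω | ε * m ^ 2 ≤ |Y m ω - μ[Y m]|} := by
      ext ω
      simp only [Set.mem_ofPred_eq, abs_div, abs_of_pos hm2, le_div_iff₀ hm2]
    rw [hset]
    refine (meas_ge_le_variance_div_sq (hY m) (by positivity)).trans
      (ENNReal.ofReal_le_ofReal ?_)
    calc Var[Y m; μ] / (ε * m ^ 2) ^ 2 ≤ C * m ^ 2 / (ε * m ^ 2) ^ 2 := by gcongr; exact hvar m
      _ = C / ε ^ 2 * (1 / (m : ℝ) ^ 2) := by field_simp
  have hsum : Summable fun m : ℕ ↦ C / ε ^ 2 * (1 / (m : ℝ) ^ 2) :=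
    (Real.summable_one_div_nat_pow.2 one_lt_two).mul_left _
  refine ne_top_of_le_ne_top ?_ (ENNReal.tsum_le_tsum hbound)
  rw [← ENNReal.ofReal_tsum_of_nonneg (fun m ↦ by positivity) hsum]
  exact ENNReal.ofReal_ne_top

lemma measure_nid_sub_le_inter_preimage [IsProbabilityMeasure μ] {β : Type*} [MeasurableSpace β]
    {ξ : Ω → ℝ} {Z : Ω → β} (hξ : Measurable ξ) (hZ : Measurable Z) (hξZ : IndepFun ξ Z μ)
    (hunif : μ.map ξ = volume.restrict (Icc (0 : ℝ) 1)) {g : β → ℝ} (hg : Measurable g)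
    {B : Set β} (hB : MeasurableSet B) (u : ℝ) :
    μ ({ω | nid (ξ ω - g (Z ω)) ≤ u} ∩ Z ⁻¹' B) =
      ENNReal.ofReal (min 1 (2 * u)) * μ (Z ⁻¹' B) := by
  set S : Set (ℝ × β) := {q | nid (q.1 - g q.2) ≤ u} ∩ Prod.snd ⁻¹' B
  have hS : MeasurableSet S :=
    (measurableSet_le (continuous_nid.measurable.comp (by fun_prop)) measurable_const).inter
      (measurable_snd hB)
  have hslice (z : β) : volume.restrict (Icc (0 : ℝ) 1) ((·, z) ⁻¹' S) =
      B.indicator (fun _ ↦ ENNReal.ofReal (min 1 (2 * u))) z := by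
    by_cases hz : z ∈ B
    · have hzS : (·, z) ⁻¹' S = {x | nid (x - g z) ≤ u} := by ext; simp [S, hz]
      rw [hzS, volume_restrict_Icc_nid_sub_le, indicator_of_mem hz]
    · have hzS : (·, z) ⁻¹' S = ∅ := by ext; simp [S, hz]
      rw [hzS, measure_empty, indicator_of_notMem hz]
  calc μ ({ω | nid (ξ ω - g (Z ω)) ≤ u} ∩ Z ⁻¹' B)
      = μ.map (fun ω ↦ (ξ ω, Z ω)) S := by rw [Measure.map_apply (hξ.prodMk hZ) hS]; rfl
    _ = (volume.restrict (Icc (0 : ℝ) 1)).prod (μ.map Z) S := by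
      rw [(indepFun_iff_map_prod_eq_prod_map_map hξ.aemeasurable hZ.aemeasurable).1 hξZ, hunif]
    _ = ENNReal.ofReal (min 1 (2 * u)) * μ (Z ⁻¹' B) := by
      rw [Measure.prod_apply_symm hS, funext hslice, lintegral_indicator_const hB,
        Measure.map_apply hZ hB]

end Probability

section PairEvents

variable {Ω : Type*}

def pairEvent (X : ℕ → Ω → ℝ) (u : ℝ) (p : ℕ × ℕ) : Set Ω := {ω | nid (X p.1 ω - X p.2 ω) ≤ u}

lemma pairEvent_swap (X : ℕ → Ω → ℝ) (u : ℝ) (p : ℕ × ℕ) :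
    pairEvent X u p.swap = pairEvent X u p := by
  ext ω
  simp only [pairEvent, Set.mem_ofPred_eq, Prod.fst_swap, Prod.snd_swap, ← nid_neg (X p.1 ω - _),
    neg_sub]

lemma pairCount_eq_sum_indicator (X : ℕ → Ω → ℝ) (t : ℝ) (N : ℕ) (ω : Ω) :
    (pairCount (X · ω) t N : ℝ) =
      ∑ p ∈ (Finset.Icc 1 N).offDiag, (pairEvent X (t / N) p).indicator 1 ω := by
  rw [pairCount_eq_card_filter, Finset.natCast_card_filter]
  simp [Set.indicator_apply, pairEvent]

variable [MeasurableSpace Ω] {μ : Measure Ω} [IsProbabilityMeasure μ] {X : ℕ → Ω → ℝ}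

lemma measurableSet_pairEvent (hmeas : ∀ i, Measurable (X i)) (u : ℝ) (p : ℕ × ℕ) :
    MeasurableSet (pairEvent X u p) :=
  measurableSet_le (continuous_nid.measurable.comp ((hmeas _).sub (hmeas _))) measurable_const

lemma measure_pairEvent (hmeas : ∀ i, Measurable (X i)) (hindep : iIndepFun X μ)
    (hunif : ∀ i, μ.map (X i) = volume.restrict (Icc (0 : ℝ) 1)) (u : ℝ) {p : ℕ × ℕ}
    (hp : p.1 ≠ p.2) : μ (pairEvent X u p) = ENNReal.ofReal (min 1 (2 * u)) := by
  simpa [pairEvent] using measure_nid_sub_le_inter_preimage (hmeas p.1) (hmeas p.2)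
    (hindep.indepFun hp) (hunif p.1) measurable_id MeasurableSet.univ u

lemma measureReal_pairEvent (hmeas : ∀ i, Measurable (X i)) (hindep : iIndepFun X μ)
    (hunif : ∀ i, μ.map (X i) = volume.restrict (Icc (0 : ℝ) 1)) {u : ℝ} (hu : 0 ≤ u)
    {p : ℕ × ℕ} (hp : p.1 ≠ p.2) : μ.real (pairEvent X u p) = min 1 (2 * u) := by
  rw [measureReal_def, measure_pairEvent hmeas hindep hunif u hp,
    ENNReal.toReal_ofReal (by positivity)]

lemma measure_pairEvent_inter_of_ne (hmeas : ∀ i, Measurable (X i)) (hindep : iIndepFun X μ)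
    (hunif : ∀ i, μ.map (X i) = volume.restrict (Icc (0 : ℝ) 1)) (u : ℝ) {i j k l : ℕ}
    (hij : i ≠ j) (hik : i ≠ k) (hil : i ≠ l) :
    μ (pairEvent X u (i, j) ∩ pairEvent X u (k, l)) =
      μ (pairEvent X u (i, j)) * μ (pairEvent X u (k, l)) := by
  set T : Finset ℕ := {j, k, l}
  set Z : Ω → T → ℝ := fun ω m ↦ X m ω
  set B : Set (T → ℝ) := {z | nid (z ⟨k, by simp [T]⟩ - z ⟨l, by simp [T]⟩) ≤ u}
  have hB : MeasurableSet B :=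
    measurableSet_le (continuous_nid.measurable.comp (by fun_prop)) measurable_const
  have hiZ : IndepFun (X i) Z μ :=
    (hindep.indepFun_finset {i} T (by simp [T, hij, hik, hil]) hmeas).comp
      (measurable_pi_apply (⟨i, Finset.mem_singleton_self i⟩ : ({i} : Finset ℕ))) measurable_id
  rw [measure_pairEvent hmeas hindep hunif u hij]
  exact measure_nid_sub_le_inter_preimage (hmeas i) (by fun_prop) hiZ (hunif i)
    (measurable_pi_apply ⟨j, by simp [T]⟩) hB u

lemma measure_pairEvent_inter (hmeas : ∀ i, Measurable (X i)) (hindep : iIndepFun X μ)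
    (hunif : ∀ i, μ.map (X i) = volume.restrict (Icc (0 : ℝ) 1)) (u : ℝ) {p q : ℕ × ℕ}
    (hp : p.1 ≠ p.2) (hqp : q ≠ p) (hqs : q ≠ p.swap) :
    μ (pairEvent X u p ∩ pairEvent X u q) = μ (pairEvent X u p) * μ (pairEvent X u q) := by
  obtain ⟨i, j⟩ := p
  obtain ⟨k, l⟩ := q
  by_cases hi : i ≠ k ∧ i ≠ l
  · exact measure_pairEvent_inter_of_ne hmeas hindep hunif u hp hi.1 hi.2
  · have hj : j ≠ k ∧ j ≠ l := by
      simp only [ne_eq, Prod.mk.injEq, Prod.swap_prod_mk] at hp hqp hqs hi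
      omega
    rw [← pairEvent_swap X u (i, j)]
    exact measure_pairEvent_inter_of_ne hmeas hindep hunif u (Ne.symm hp) hj.1 hj.2

lemma memLp_pairCount (hmeas : ∀ i, Measurable (X i)) (t : ℝ) (N : ℕ) :
    MemLp (fun ω ↦ (pairCount (X · ω) t N : ℝ)) 2 μ := by
  simp_rw [pairCount_eq_sum_indicator]
  exact memLp_finsetSum _ fun p _ ↦ memLp_two_indicator_one (measurableSet_pairEvent hmeas _ p)

lemma integral_pairCount (hmeas : ∀ i, Measurable (X i)) (hindep : iIndepFun X μ)
    (hunif : ∀ i, μ.map (X i) = volume.restrict (Icc (0 : ℝ) 1)) {t : ℝ} (ht : 0 ≤ t) (N : ℕ) :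
    μ[fun ω ↦ (pairCount (X · ω) t N : ℝ)] = ((N : ℝ) ^ 2 - N) * min 1 (2 * (t / N)) := by
  simp_rw [pairCount_eq_sum_indicator]
  rw [integral_finsetSum _ fun p _ ↦
    (integrable_const 1).indicator (measurableSet_pairEvent hmeas _ p)]
  rw [Finset.sum_congr rfl fun p hp ↦ by
    rw [integral_indicator_one (measurableSet_pairEvent hmeas _ p),
      measureReal_pairEvent hmeas hindep hunif (by positivity) (Finset.mem_offDiag.1 hp).2.2],
    Finset.sum_const, nsmul_eq_mul, cast_card_offDiag_Icc]

lemma sum_covariance_pairEvent_le (hmeas : ∀ i, Measurable (X i)) (hindep : iIndepFun X μ)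
    (hunif : ∀ i, μ.map (X i) = volume.restrict (Icc (0 : ℝ) 1)) {u : ℝ} (hu : 0 ≤ u)
    (P : Finset (ℕ × ℕ)) {p : ℕ × ℕ} (hp : p.1 ≠ p.2) :
    ∑ q ∈ P, cov[(pairEvent X u p).indicator 1, (pairEvent X u q).indicator 1; μ] ≤
      2 * min 1 (2 * u) := by
  set A := pairEvent X u
  have hA := measurableSet_pairEvent hmeas u
  have hzero (q : ℕ × ℕ) (hq : cov[(A p).indicator 1, (A q).indicator 1; μ] ≠ 0) :
      q ∈ ({p, p.swap} : Finset _) := by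
    by_contra hqp
    simp only [Finset.mem_insert, Finset.mem_singleton, not_or] at hqp
    rw [covariance_indicator_one (hA p) (hA q), measureReal_def, measureReal_def,
      measureReal_def, measure_pairEvent_inter hmeas hindep hunif u hp hqp.1 hqp.2,
      ENNReal.toReal_mul, sub_self] at hq
    exact hq rfl
  have hle (q : ℕ × ℕ) : cov[(A p).indicator 1, (A q).indicator 1; μ] ≤ min 1 (2 * u) := by
    rw [covariance_indicator_one (hA p) (hA q), ← measureReal_pairEvent hmeas hindep hunif hu hp]
    have := measureReal_mono (μ := μ) (inter_subset_left : A p ∩ A q ⊆ A p)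
    nlinarith [measureReal_nonneg (μ := μ) (s := A p), measureReal_nonneg (μ := μ) (s := A q)]
  calc ∑ q ∈ P, cov[(A p).indicator 1, (A q).indicator 1; μ]
      = ∑ q ∈ P.filter (· ∈ ({p, p.swap} : Finset _)),
          cov[(A p).indicator 1, (A q).indicator 1; μ] :=
        (Finset.sum_filter_of_ne fun q _ ↦ hzero q).symm
    _ ≤ (P.filter (· ∈ ({p, p.swap} : Finset _))).card • min 1 (2 * u) :=
        Finset.sum_le_card_nsmul _ _ _ fun q _ ↦ hle q
    _ ≤ 2 * min 1 (2 * u) := by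
        rw [nsmul_eq_mul]
        refine mul_le_mul_of_nonneg_right ?_ (by positivity)
        exact_mod_cast (Finset.card_le_card fun q hq ↦ (Finset.mem_filter.1 hq).2).trans
          Finset.card_le_two

lemma variance_pairCount_le (hmeas : ∀ i, Measurable (X i)) (hindep : iIndepFun X μ)
    (hunif : ∀ i, μ.map (X i) = volume.restrict (Icc (0 : ℝ) 1)) {t : ℝ} (ht : 0 ≤ t) (N : ℕ) :
    Var[fun ω ↦ (pairCount (X · ω) t N : ℝ); μ] ≤ 4 * t * N := by
  set P := (Finset.Icc 1 N).offDiag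
  have hc : min 1 (2 * (t / N)) ≤ 2 * (t / N) := min_le_right _ _
  simp_rw [pairCount_eq_sum_indicator]
  rw [variance_fun_sum' fun p _ ↦ memLp_two_indicator_one (measurableSet_pairEvent hmeas _ p)]
  calc ∑ p ∈ P, ∑ q ∈ P, cov[(pairEvent X (t / N) p).indicator 1,
          (pairEvent X (t / N) q).indicator 1; μ]
      ≤ ∑ p ∈ P, 2 * min 1 (2 * (t / N)) := Finset.sum_le_sum fun p hp ↦
        sum_covariance_pairEvent_le hmeas hindep hunif (by positivity) P
          (Finset.mem_offDiag.1 hp).2.2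
    _ = ((N : ℝ) ^ 2 - N) * (2 * min 1 (2 * (t / N))) := by
        rw [Finset.sum_const, nsmul_eq_mul, cast_card_offDiag_Icc]
    _ ≤ (N : ℝ) ^ 2 * (2 * (2 * (t / N))) :=
        mul_le_mul (by linarith [(N.cast_nonneg : (0 : ℝ) ≤ N)]) (by linarith) (by positivity)
          (by positivity)
    _ = 4 * t * N := by
        rcases eq_or_ne N 0 with rfl | hN
        · simp
        · field_simp
          ring

lemma tendsto_integral_pairCount_sq (hmeas : ∀ i, Measurable (X i)) (hindep : iIndepFun X μ)
    (hunif : ∀ i, μ.map (X i) = volume.restrict (Icc (0 : ℝ) 1)) {t : ℝ} (ht : 0 ≤ t) :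
    Tendsto (fun m : ℕ ↦ μ[fun ω ↦ (pairCount (X · ω) t (m ^ 2) : ℝ)] / (m : ℝ) ^ 2) atTop
      (𝓝 (2 * t)) := by
  have hsq : Tendsto (fun m : ℕ ↦ (m : ℝ) ^ 2) atTop atTop :=
    (tendsto_pow_atTop two_ne_zero).comp tendsto_natCast_atTop_atTop
  have hlim : Tendsto (fun m : ℕ ↦ 2 * t - 2 * t / (m : ℝ) ^ 2) atTop (𝓝 (2 * t)) := by
    simpa using tendsto_const_nhds.sub (tendsto_const_nhds.div_atTop hsq)
  refine hlim.congr' ?_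
  filter_upwards [hsq.eventually_ge_atTop (2 * t), hsq.eventually_gt_atTop 0] with m hm hm0
  have hm0' : (m : ℝ) ≠ 0 := by rintro h; simp [h] at hm0
  rw [integral_pairCount hmeas hindep hunif ht, min_eq_right]
  · push_cast
    field_simp
  · push_cast
    rw [mul_div_assoc', div_le_one hm0]
    exact hm

lemma ae_tendsto_pairCount_sq (hmeas : ∀ i, Measurable (X i)) (hindep : iIndepFun X μ)
    (hunif : ∀ i, μ.map (X i) = volume.restrict (Icc (0 : ℝ) 1)) {t : ℝ} (ht : 0 ≤ t) :
    ∀ᵐ ω ∂μ, Tendsto (fun m : ℕ ↦ (pairCount (X · ω) t (m ^ 2) : ℝ) / (m : ℝ) ^ 2) atTop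
      (𝓝 (2 * t)) := by
  have hvar (m : ℕ) :
      Var[fun ω ↦ (pairCount (X · ω) t (m ^ 2) : ℝ); μ] ≤ 4 * t * (m : ℝ) ^ 2 := by
    have := variance_pairCount_le hmeas hindep hunif ht (m ^ 2)
    push_cast at this
    exact this
  filter_upwards [ae_tendsto_sub_integral_div_sq (fun m ↦ memLp_pairCount hmeas t (m ^ 2)) hvar]
    with ω hω
  simpa [sub_div] using hω.add (tendsto_integral_pairCount_sq hmeas hindep hunif ht)

end PairEvents

/-- A sequence of independent random variables, each uniformly
distributed on `[0,1]`, almost surely has Poissonian pair correlations. -/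
theorem statement3 {Ω : Type*} [MeasurableSpace Ω] (μ : Measure Ω)
    [IsProbabilityMeasure μ] (X : ℕ → Ω → ℝ) (hmeas : ∀ i, Measurable (X i))
    (hindep : iIndepFun X μ)
    (hunif : ∀ i, Measure.map (X i) μ = volume.restrict (Set.Icc (0 : ℝ) 1)) :
    ∀ᵐ ω ∂μ, ∀ s : ℝ, 0 ≤ s →
      Tendsto (fun N : ℕ => (pairCount (fun n => X n ω) s N : ℝ) / N)
        atTop (nhds (2 * s)) := by
  have hsq : ∀ᵐ ω ∂μ, ∀ q : ℚ, 0 ≤ q → Tendsto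
      (fun m : ℕ ↦ (pairCount (X · ω) q (m ^ 2) : ℝ) / (m : ℝ) ^ 2) atTop (𝓝 (2 * (q : ℝ))) := by
    refine ae_all_iff.2 fun q ↦ ?_
    rcases le_or_gt 0 q with hq | hq
    · filter_upwards [ae_tendsto_pairCount_sq hmeas hindep hunif (Rat.cast_nonneg.2 hq)]
        with ω hω _ using hω
    · exact .of_forall fun ω hq' ↦ absurd hq' hq.not_ge
  filter_upwards [hsq] with ω hω s hs
  exact tendsto_pairCount_of_tendsto_sq hω hs
end

section
/- Let (x_N)_{N∈ℕ} be a sequence in [0,1) having f-pair correlations for some function f : [0,∞) → [0,∞). If the number m_N of indices i ≤ N for which there exists j ≤ N with j ≠ i and x_j = x_i satisfies m_N = o(√N) as N → ∞, then f(0) = 0. In particular, if the elements of the sequence are pairwise distinct, then f(0) = 0. -/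
open Filter Set Asymptotics

/-- If a sequence in `[0,1)` has `f`-pair correlations and the number
`m N` of indices `i ≤ N` whose value is attained by another index `j ≤ N` is
`o(√N)`, then `f 0 = 0`. -/
theorem statement5 (x : ℕ → ℝ) (hx : ∀ n, x n ∈ Ico (0 : ℝ) 1)
    (f : ℝ → ℝ) (hf_nonneg : ∀ s : ℝ, 0 ≤ s → 0 ≤ f s)
    (hpc : HasPairCorr x f) (m : ℕ → ℕ)
    (hm : ∀ N, m N =
      {i : ℕ | 1 ≤ i ∧ i ≤ N ∧ ∃ j, 1 ≤ j ∧ j ≤ N ∧ j ≠ i ∧ x j = x i}.ncard)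
    (ho : (fun N : ℕ => (m N : ℝ)) =o[atTop] fun N : ℕ => Real.sqrt N) :
    f 0 = 0 := by
  -- The set of "repeated" indices up to N
  set S : ℕ → Set ℕ := fun N =>
    {i : ℕ | 1 ≤ i ∧ i ≤ N ∧ ∃ j, 1 ≤ j ∧ j ≤ N ∧ j ≠ i ∧ x j = x i} with hS
  have hSfin : ∀ N, (S N).Finite := by
    intro N
    exact (Set.finite_Icc 1 N).subset (fun i hi => ⟨hi.1, hi.2.1⟩)
  have hcount : ∀ N : ℕ, pairCount x 0 N ≤ m N * m N := by
    intro N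
    rw [hm N]
    have hsub : {p : ℕ × ℕ | 1 ≤ p.1 ∧ p.1 ≤ N ∧ 1 ≤ p.2 ∧ p.2 ≤ N ∧ p.1 ≠ p.2 ∧
        nid (x p.1 - x p.2) ≤ 0 / N} ⊆ (S N) ×ˢ (S N) := by
      rintro ⟨i, j⟩ ⟨hi1, hiN, hj1, hjN, hij, hnid⟩
      have heq : x i = x j := by
        have h0 : nid (x i - x j) = 0 := le_antisymm (by simpa using hnid) (abs_nonneg _)
        have hd : x i - x j = (round (x i - x j) : ℝ) := by
          have := abs_eq_zero.mp h0
          linarith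
        have habs : |x i - x j| < 1 := by
          have h1 := hx i; have h2 := hx j
          rw [abs_lt]; constructor <;> [linarith [h1.1, h2.2]; linarith [h1.2, h2.1]]
        have : |(round (x i - x j) : ℝ)| < 1 := hd ▸ habs
        have hz : round (x i - x j) = 0 := by
          have := this
          rw [← Int.cast_abs] at this
          exact_mod_cast abs_eq_zero.mp (le_antisymm (by exact_mod_cast Int.lt_add_one_iff.mp (by exact_mod_cast this)) (abs_nonneg _))
        have : x i - x j = 0 := by rw [hd, hz]; norm_num
        linarith
      refine ⟨⟨hi1, hiN, j, hj1, hjN, hij.symm, heq.symm⟩,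
        ⟨hj1, hjN, i, hi1, hiN, hij, heq⟩⟩
    calc pairCount x 0 N ≤ ((S N) ×ˢ (S N)).ncard :=
          Set.ncard_le_ncard hsub (((hSfin N).prod (hSfin N)))
      _ = (S N).ncard * (S N).ncard := by
          rw [← Nat.card_coe_set_eq, ← Nat.card_coe_set_eq (S N),
            Nat.card_congr (Equiv.Set.prod _ _), Nat.card_prod]
  -- m N / sqrt N → 0
  have hdiv : Tendsto (fun N : ℕ => (m N : ℝ) / Real.sqrt N) atTop (nhds 0) := by
    apply ho.tendsto_div_nhds_zero
  have hsq : Tendsto (fun N : ℕ => ((m N : ℝ) / Real.sqrt N) ^ 2) atTop (nhds 0) := by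
    have := hdiv.pow 2
    simpa using this
  have h0 : Tendsto (fun N : ℕ => (pairCount x 0 N : ℝ) / N) atTop (nhds 0) := by
    apply squeeze_zero' (g := fun N : ℕ => ((m N : ℝ) / Real.sqrt N) ^ 2)
    · filter_upwards with N
      positivity
    · filter_upwards [eventually_ge_atTop 1] with N hN
      have hNpos : (0 : ℝ) < N := by exact_mod_cast hN
      have hsqrt : Real.sqrt N ^ 2 = (N : ℝ) := Real.sq_sqrt hNpos.le
      rw [div_pow, hsqrt, div_le_div_iff_of_pos_right hNpos]
      calc (pairCount x 0 N : ℝ) ≤ ((m N * m N : ℕ) : ℝ) := by exact_mod_cast hcount N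
        _ = (m N : ℝ) ^ 2 := by push_cast; ring
    · exact hsq
  exact tendsto_nhds_unique (hpc 0 le_rfl) h0
end

section
/- Let (x_N)_{N∈ℕ} be a sequence in [0,1) and let l_N denote the number of distinct values among x_1,…,x_N. If there is a strictly increasing sequence (N_m) of indices with lim_{m→∞} l_{N_m}/N_m = 0, then for every function f : [0,∞) → [0,∞) the sequence (x_N) does not have f-pair correlations; indeed, for every s ≥ 0, limsup_{N→∞} R(s,N)/N = ∞. -/
open Filter Set Asymptotics

/-- Cauchy–Schwarz counting: `N² ≤ l(N) · #{(i,j) ∈ [1,N]² : x i = x j}`. -/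
lemma key_cs (x : ℕ → ℝ) (N : ℕ) :
    (N : ℝ) ^ 2 ≤ ((Finset.Icc 1 N).image x).card *
      ((((Finset.Icc 1 N) ×ˢ (Finset.Icc 1 N)).filter fun p => x p.1 = x p.2).card : ℝ) := by
  classical
  set S := Finset.Icc 1 N with hS
  set T := S.image x with hT
  set k : ℝ → ℕ := fun v => (S.filter fun i => x i = v).card with hk
  have hsum : ∑ v ∈ T, k v = N := by
    rw [← Finset.card_eq_sum_card_fiberwise (f := x) (s := S) (t := T)
      (fun i hi => Finset.mem_image_of_mem x hi)]
    simp [hS]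
  have hcard : ((S ×ˢ S).filter fun p => x p.1 = x p.2).card = ∑ v ∈ T, k v ^ 2 := by
    rw [Finset.card_filter, Finset.sum_product]
    have h1 : ∀ i ∈ S, (∑ j ∈ S, if x i = x j then (1:ℕ) else 0) = k (x i) := by
      intro i hi
      rw [hk]
      simp only [Finset.card_filter]
      exact Finset.sum_congr rfl fun j hj => by simp [eq_comm]
    rw [Finset.sum_congr rfl h1, Finset.sum_comp k x]
    exact Finset.sum_congr rfl fun v hv => by rw [smul_eq_mul, sq]
  have cs : ((∑ v ∈ T, (k v : ℝ)) ^ 2) ≤ T.card * ∑ v ∈ T, (k v : ℝ) ^ 2 :=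
    sq_sum_le_card_mul_sum_sq
  push_cast [hcard, ← hsum]
  exact_mod_cast cs

/-- The equal-pair count is at most `R(s,N) + N`. -/
lemma filter_le_pairCount (x : ℕ → ℝ) {s : ℝ} (hs : 0 ≤ s) (N : ℕ) :
    ((((Finset.Icc 1 N) ×ˢ (Finset.Icc 1 N)).filter fun p => x p.1 = x p.2).card : ℕ)
      ≤ pairCount x s N + N := by
  classical
  set S := Finset.Icc 1 N with hS
  set P' := (S ×ˢ S).filter (fun p : ℕ × ℕ => x p.1 = x p.2) with hP'
  have hsplit : (P'.filter fun p => p.1 ≠ p.2).card +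
      (P'.filter fun p => ¬ p.1 ≠ p.2).card = P'.card :=
    Finset.card_filter_add_card_filter_not _
  have hdiag : (P'.filter fun p => ¬ p.1 ≠ p.2).card ≤ N := by
    have hsub : (P'.filter fun p => ¬ p.1 ≠ p.2) ⊆ S.image fun i => (i, i) := by
      intro p hp
      simp only [Finset.mem_filter, not_not, hP', Finset.mem_product] at hp
      obtain ⟨⟨⟨h1, h2⟩, hxy⟩, heq⟩ := hp
      refine Finset.mem_image.mpr ⟨p.1, h1, ?_⟩
      exact Prod.ext rfl heq
    calc (P'.filter fun p => ¬ p.1 ≠ p.2).card ≤ (S.image fun i => (i, i)).card :=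
          Finset.card_le_card hsub
      _ ≤ S.card := Finset.card_image_le
      _ ≤ N := by simp [hS]
  have hP_le : (P'.filter fun p => p.1 ≠ p.2).card ≤ pairCount x s N := by
    rw [pairCount, ← Set.ncard_coe_finset (P'.filter fun p => p.1 ≠ p.2)]
    apply Set.ncard_le_ncard
    · intro p hp
      simp only [Finset.coe_filter, hP', Finset.mem_filter, Finset.mem_product, hS,
        Finset.mem_Icc, Set.mem_setOf_eq] at hp ⊢
      obtain ⟨⟨⟨⟨h1, h2⟩, h3, h4⟩, hxy⟩, hne⟩ := hp
      refine ⟨h1, h2, h3, h4, hne, ?_⟩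
      rw [sub_eq_zero.mpr hxy]
      simp only [nid]
      rw [round_zero]
      simp
      positivity
    · apply Set.Finite.subset (((Set.finite_Icc 1 N).prod (Set.finite_Icc 1 N)))
      intro p hp
      simp only [Set.mem_setOf_eq] at hp
      exact ⟨⟨hp.1, hp.2.1⟩, hp.2.2.1, hp.2.2.2.1⟩
  omega

/-- Let `l N` be the number of distinct values among `x 1, …, x N`.
If `l (N m) / N m → 0` along a strictly increasing sequence of indices `N m`, then
`x` does not have `f`-pair correlations for any `f : [0,∞) → [0,∞)`; indeed, for every
`s ≥ 0`, `limsup R(s,N)/N = ∞` (i.e. `R(s,N)/N` exceeds any bound frequently). -/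
theorem statement10 (x : ℕ → ℝ) (hx : ∀ n, x n ∈ Ico (0 : ℝ) 1)
    (l : ℕ → ℕ) (hl : ∀ N, l N = (Finset.image x (Finset.Icc 1 N)).card)
    (hsub : ∃ Nm : ℕ → ℕ, StrictMono Nm ∧
      Tendsto (fun m : ℕ => (l (Nm m) : ℝ) / (Nm m)) atTop (nhds 0)) :
    (∀ f : ℝ → ℝ, (∀ s : ℝ, 0 ≤ s → 0 ≤ f s) → ¬ HasPairCorr x f) ∧
    (∀ s : ℝ, 0 ≤ s → ∀ C : ℝ, ∃ᶠ N : ℕ in atTop, C < (pairCount x s N : ℝ) / N) := by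
  obtain ⟨Nm, hmono, hten⟩ := hsub
  have key2 : ∀ s : ℝ, 0 ≤ s → ∀ N : ℕ,
      (N : ℝ) ^ 2 ≤ (l N : ℝ) * ((pairCount x s N : ℝ) + N) := by
    intro s hs N
    refine le_trans (key_cs x N) ?_
    rw [hl N]
    have h2 := filter_le_pairCount x hs N
    have h2' : ((((Finset.Icc 1 N) ×ˢ (Finset.Icc 1 N)).filter fun p => x p.1 = x p.2).card : ℝ)
        ≤ (pairCount x s N : ℝ) + N := by exact_mod_cast h2
    exact mul_le_mul_of_nonneg_left h2' (Nat.cast_nonneg _)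
  have main : ∀ s : ℝ, 0 ≤ s → ∀ C : ℝ,
      ∃ᶠ N : ℕ in atTop, C < (pairCount x s N : ℝ) / N := by
    intro s hs C
    rw [Filter.frequently_atTop]
    intro a
    set C' : ℝ := max C 0 with hC'
    have hC'2 : (0 : ℝ) < 1 / (C' + 2) := by positivity
    have hev : ∀ᶠ m in atTop, (l (Nm m) : ℝ) / (Nm m) < 1 / (C' + 2) :=
      hten.eventually_lt_const hC'2
    obtain ⟨m, hm1, hm2⟩ := (hev.and (eventually_ge_atTop (max a 1))).exists
    refine ⟨Nm m, le_trans (le_trans (le_max_left a 1) hm2) hmono.le_apply, ?_⟩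
    set N := Nm m with hN
    have hN1 : 1 ≤ N := le_trans (le_trans (le_max_right a 1) hm2) hmono.le_apply
    have hNpos : (0 : ℝ) < N := by exact_mod_cast hN1
    have hLpos : (0 : ℝ) < (l N : ℝ) := by
      rw [hl N]
      have : (1 : ℕ) ∈ Finset.Icc 1 N := Finset.mem_Icc.mpr ⟨le_refl 1, hN1⟩
      have hne : (Finset.image x (Finset.Icc 1 N)).Nonempty := ⟨x 1, Finset.mem_image_of_mem x this⟩
      exact_mod_cast Finset.card_pos.mpr hne
    have hr : (l N : ℝ) / N < 1 / (C' + 2) := hm1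
    have h1 : (l N : ℝ) * (C' + 2) < 1 * N := (div_lt_div_iff₀ hNpos (by positivity)).mp hr
    have h2 := key2 s hs N
    set pc : ℝ := (pairCount x s N : ℝ) with hpc
    rw [lt_div_iff₀ hNpos]
    -- From N² ≤ l·(pc + N) and l·(C'+2) < N, get C·N < pc.
    have h3 : (l N : ℝ) * ((C' + 1) * N) < (l N : ℝ) * pc := by
      nlinarith [mul_lt_mul_of_pos_right h1 hNpos]
    have h4 : (C' + 1) * N < pc := lt_of_mul_lt_mul_left h3 hLpos.le
    have hCC' : C ≤ C' := le_max_left C 0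
    nlinarith
  refine ⟨?_, main⟩
  intro f hf hcorr
  have ht := hcorr 0 le_rfl
  have he : ∀ᶠ N : ℕ in atTop, (pairCount x 0 N : ℝ) / N < f 0 + 1 :=
    ht.eventually_lt_const (lt_add_one (f 0))
  obtain ⟨N, h1, h2⟩ := ((main 0 le_rfl (f 0 + 1)).and_eventually he).exists
  linarith
end
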